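/- arXiv:1704.01094 — 2 statements merged into one kernel-verified Lean document; each statement's English description precedes it below -/
import Mathlib

section
/- For any two sub-σ-algebras 𝒢, ℋ of ℱ, the φ-mixing coefficient satisfies 2φ(𝒢, ℋ) = sup{ ‖E[g|𝒢] − E g‖_{L^∞} : g ∈ L^∞(Ω, ℋ, P), ‖g‖_{L^∞} ≤ 1 }. -/
/-!
For `H`-measurable `g` with `|g| ≤ 1` and `A ∈ G`, pulling `g` out of `E[· | H]` gives
`∫_A g - P(A) E g = E[g (E[1_A | H] - P(A))]`, which is at most `‖E[1_A | H] - P(A)‖₁`.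
Splitting `Ω` along the `H`-measurable sign of `E[1_A | H] - P(A)`, each half is some
`|P(A ∩ B) - P(A) P(B)| ≤ φ P(A)`. Hence `|∫_A (E[g | G] - E g)| ≤ 2φ P(A)` for every `A ∈ G`,
i.e. `‖E[g | G] - E g‖_∞ ≤ 2φ`. Conversely, `g = 2·1_B - 1` gives
`∫_A (E[g | G] - E g) = 2 (P(A ∩ B) - P(A) P(B))`, so the supremum is at least `2φ`.
-/

open MeasureTheory
open scoped ENNReal

/-- The uniform (φ) mixing coefficient between two sub-σ-algebras. -/
noncomputable def phiMix {Ω : Type*} {m0 : MeasurableSpace Ω} (μ : Measure Ω)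
    (G H : MeasurableSpace Ω) : ℝ :=
  sSup {x : ℝ | ∃ A B : Set Ω, MeasurableSet[G] A ∧ MeasurableSet[H] B ∧
    0 < (μ A).toReal ∧ x = |(μ (A ∩ B)).toReal / (μ A).toReal - (μ B).toReal|}

section

variable {Ω : Type*} {m0 : MeasurableSpace Ω} {μ : Measure Ω}

lemma ae_norm_le_toReal_eLpNorm_top {f : Ω → ℝ} (hf : eLpNorm f ⊤ μ ≠ ⊤) :
    ∀ᵐ x ∂μ, ‖f x‖ ≤ (eLpNorm f ⊤ μ).toReal := by
  filter_upwards [ae_le_eLpNormEssSup (f := f) (μ := μ)] with x hx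
  rwa [← eLpNorm_exponent_top, ← ofReal_norm, ENNReal.ofReal_le_iff_le_toReal hf] at hx

lemma abs_setIntegral_le_toReal_eLpNorm_top_mul [IsFiniteMeasure μ] {f : Ω → ℝ}
    (hf : eLpNorm f ⊤ μ ≠ ⊤) (s : Set Ω) :
    |∫ x in s, f x ∂μ| ≤ (eLpNorm f ⊤ μ).toReal * μ.real s :=
  norm_setIntegral_le_of_norm_le_const_ae' (measure_lt_top μ s)
    ((ae_norm_le_toReal_eLpNorm_top hf).mono fun _ hx _ => hx)

lemma integral_abs_le_of_forall_abs_setIntegral_le {m : MeasurableSpace Ω} (hm : m ≤ m0)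
    {h : Ω → ℝ} (hh : StronglyMeasurable[m] h) (hhi : Integrable h μ) {C : ℝ}
    (hC : ∀ s, MeasurableSet[m] s → |∫ x in s, h x ∂μ| ≤ C) :
    ∫ x, |h x| ∂μ ≤ 2 * C := by
  set P := {x | 0 ≤ h x}
  have hP : MeasurableSet[m] P := measurableSet_le stronglyMeasurable_const.measurable hh.measurable
  have hsplit : ∫ x, |h x| ∂μ = ∫ x in P, h x ∂μ - ∫ x in Pᶜ, h x ∂μ := by
    rw [← integral_add_compl (hm P hP) hhi.abs, sub_eq_add_neg, ← integral_neg]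
    congr 1
    · exact setIntegral_congr_fun (hm P hP) fun x hx => abs_of_nonneg hx
    · exact setIntegral_congr_fun (hm P hP).compl fun x hx => abs_of_neg (not_le.mp hx)
  rw [hsplit]
  linarith [(abs_le.mp (hC P hP)).2, (abs_le.mp (hC Pᶜ hP.compl)).1]

lemma ae_abs_le_of_forall_abs_setIntegral_le [IsFiniteMeasure μ] {m : MeasurableSpace Ω}
    (hm : m ≤ m0) {f : Ω → ℝ} (hf : StronglyMeasurable[m] f) (hfi : Integrable f μ) {C : ℝ}
    (hC : ∀ s, MeasurableSet[m] s → |∫ x in s, f x ∂μ| ≤ C * μ.real s) :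
    ∀ᵐ x ∂μ, |f x| ≤ C := by
  have hfi' : Integrable f (μ.trim hm) := hfi.trim hm hf
  have hCi : Integrable (fun _ => C) (μ.trim hm) := integrable_const C
  have hsetC : ∀ s, MeasurableSet[m] s → ∫ x in s, C ∂μ.trim hm = C * μ.real s := fun s hs => by
    rw [← setIntegral_trim hm stronglyMeasurable_const hs, setIntegral_const, smul_eq_mul, mul_comm]
  have hle : f ≤ᵐ[μ.trim hm] fun _ => C := ae_le_of_forall_setIntegral_le hfi' hCi fun s hs _ => by
    rw [← setIntegral_trim hm hf hs, hsetC s hs]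
    exact (abs_le.mp (hC s hs)).2
  have hge : -f ≤ᵐ[μ.trim hm] fun _ => C :=
    ae_le_of_forall_setIntegral_le hfi'.neg hCi fun s hs _ => by
      rw [← setIntegral_trim hm hf.neg hs, hsetC s hs, Pi.neg_def, integral_neg]
      linarith [(abs_le.mp (hC s hs)).1]
  filter_upwards [ae_of_ae_trim hm hle, ae_of_ae_trim hm hge] with x h1 h2
  exact abs_le.mpr ⟨neg_le.mp h2, h1⟩

lemma abs_integral_mul_sub_le_integral_abs_condExp_sub [IsFiniteMeasure μ]
    {m : MeasurableSpace Ω} (hm : m ≤ m0) {g χ : Ω → ℝ} (hg : StronglyMeasurable[m] g)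
    (hg1 : ∀ᵐ x ∂μ, |g x| ≤ 1) (hχ : Integrable χ μ) :
    |∫ x, g x * χ x ∂μ - (∫ x, χ x ∂μ) * ∫ x, g x ∂μ| ≤
      ∫ x, |(μ[χ|m]) x - ∫ y, χ y ∂μ| ∂μ := by
  set c := ∫ y, χ y ∂μ
  set k := μ[χ|m]
  have hg1' : ∀ᵐ x ∂μ, ‖g x‖ ≤ 1 := hg1
  have hgm : AEStronglyMeasurable[m0] g μ := (hg.mono hm).aestronglyMeasurable
  have hgi : Integrable g μ := .of_bound hgm 1 hg1'
  have hkc : Integrable (fun x => k x - c) μ := integrable_condExp.sub (integrable_const c)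
  have hpull : ∫ x, g x * χ x ∂μ = ∫ x, g x * k x ∂μ := by
    rw [← integral_condExp hm]
    exact integral_congr_ae
      (condExp_mul_of_stronglyMeasurable_left hg (hχ.bdd_mul hgm hg1') hχ)
  have hcentre : ∫ x, g x * χ x ∂μ - c * ∫ x, g x ∂μ = ∫ x, g x * (k x - c) ∂μ := by
    simp_rw [hpull, mul_sub, ← integral_const_mul c, mul_comm c]
    rw [integral_sub (integrable_condExp.bdd_mul hgm hg1') (hgi.mul_const c)]
  rw [hcentre]
  calc |∫ x, g x * (k x - c) ∂μ| ≤ ∫ x, |g x * (k x - c)| ∂μ := abs_integral_le_integral_abs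
    _ ≤ ∫ x, |k x - c| ∂μ := integral_mono_ae (hkc.bdd_mul hgm hg1').abs hkc.abs <| by
        filter_upwards [hg1] with x hx
        rw [abs_mul]
        exact mul_le_of_le_one_left (abs_nonneg _) hx

section PhiMix

variable {G H : MeasurableSpace Ω}

lemma phiMix_nonneg : 0 ≤ phiMix μ G H :=
  Real.sSup_nonneg fun _ ⟨_, _, _, _, _, hx⟩ => hx ▸ abs_nonneg _

lemma phiMix_le {c : ℝ} (hc : 0 ≤ c)
    (h : ∀ A B, MeasurableSet[G] A → MeasurableSet[H] B → 0 < μ.real A →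
      |μ.real (A ∩ B) / μ.real A - μ.real B| ≤ c) :
    phiMix μ G H ≤ c :=
  Real.sSup_le (fun _ ⟨A, B, hA, hB, hA0, hx⟩ => hx ▸ h A B hA hB hA0) hc

variable [IsProbabilityMeasure μ]

lemma abs_div_sub_le_phiMix {A B : Set Ω} (hA : MeasurableSet[G] A) (hB : MeasurableSet[H] B)
    (hA0 : 0 < μ.real A) : |μ.real (A ∩ B) / μ.real A - μ.real B| ≤ phiMix μ G H := by
  refine le_csSup ⟨1, ?_⟩ ⟨A, B, hA, hB, hA0, rfl⟩
  rintro _ ⟨A', B', -, -, hA', -, rfl⟩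
  change 0 < μ.real A' at hA'
  change |μ.real (A' ∩ B') / μ.real A' - μ.real B'| ≤ 1
  have hratio : μ.real (A' ∩ B') / μ.real A' ≤ 1 :=
    div_le_one_of_le₀ (measureReal_mono Set.inter_subset_left) hA'.le
  have hratio' : 0 ≤ μ.real (A' ∩ B') / μ.real A' := by positivity
  have hB' : μ.real B' ≤ 1 := measureReal_le_one
  rw [abs_le]
  constructor <;> linarith [measureReal_nonneg (μ := μ) (s := B')]

lemma abs_measureReal_inter_sub_mul_le {A B : Set Ω} (hA : MeasurableSet[G] A)
    (hB : MeasurableSet[H] B) :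
    |μ.real (A ∩ B) - μ.real A * μ.real B| ≤ phiMix μ G H * μ.real A := by
  rcases (measureReal_nonneg (s := A)).eq_or_lt with hA0 | hA0
  · have : μ.real (A ∩ B) = 0 :=
      le_antisymm (hA0 ▸ measureReal_mono Set.inter_subset_left) measureReal_nonneg
    simp [← hA0, this]
  · have h := abs_div_sub_le_phiMix hA hB hA0
    rwa [div_sub' hA0.ne', abs_div, abs_of_pos hA0, div_le_iff₀ hA0] at h

lemma setIntegral_condExp_indicator_sub (hH : H ≤ m0) {A B : Set Ω} (hA : MeasurableSet[m0] A)
    (hB : MeasurableSet[H] B) :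
    ∫ x in B, ((μ[A.indicator 1|H]) x - μ.real A) ∂μ = μ.real (A ∩ B) - μ.real A * μ.real B := by
  rw [integral_sub integrable_condExp.integrableOn (integrable_const _).integrableOn,
    setIntegral_condExp hH ((integrable_const 1).indicator hA) hB, integral_indicator_one hA,
    setIntegral_const, smul_eq_mul, measureReal_restrict_apply hA, mul_comm]

lemma integral_abs_condExp_indicator_sub_le (hG : G ≤ m0) (hH : H ≤ m0) {A : Set Ω}
    (hA : MeasurableSet[G] A) :
    ∫ x, |(μ[A.indicator 1|H]) x - μ.real A| ∂μ ≤ 2 * phiMix μ G H * μ.real A := by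
  rw [mul_assoc]
  refine integral_abs_le_of_forall_abs_setIntegral_le hH
    (h := fun x => (μ[A.indicator 1|H]) x - μ.real A)
    (stronglyMeasurable_condExp.sub stronglyMeasurable_const)
    (integrable_condExp.sub (integrable_const _)) fun B hB => ?_
  rw [setIntegral_condExp_indicator_sub hH (hG A hA) hB]
  exact abs_measureReal_inter_sub_mul_le hA hB

lemma setIntegral_condExp_sub_integral (hG : G ≤ m0) {g : Ω → ℝ} (hg : Integrable g μ)
    {A : Set Ω} (hA : MeasurableSet[G] A) :
    ∫ x in A, ((μ[g|G]) x - ∫ y, g y ∂μ) ∂μ = ∫ x in A, g x ∂μ - μ.real A * ∫ y, g y ∂μ := by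
  rw [integral_sub integrable_condExp.integrableOn (integrable_const _).integrableOn,
    setIntegral_condExp hG hg hA, setIntegral_const, smul_eq_mul]

lemma abs_setIntegral_condExp_sub_integral_le (hG : G ≤ m0) (hH : H ≤ m0) {g : Ω → ℝ}
    (hg : StronglyMeasurable[H] g) (hg1 : ∀ᵐ x ∂μ, |g x| ≤ 1) {A : Set Ω}
    (hA : MeasurableSet[G] A) :
    |∫ x in A, ((μ[g|G]) x - ∫ y, g y ∂μ) ∂μ| ≤ 2 * phiMix μ G H * μ.real A := by
  have hA' : MeasurableSet[m0] A := hG A hA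
  have hgi : Integrable g μ := .of_bound (hg.mono hH).aestronglyMeasurable 1 hg1
  have h := abs_integral_mul_sub_le_integral_abs_condExp_sub hH hg hg1
    (χ := A.indicator 1) ((integrable_const 1).indicator hA')
  simp only [integral_indicator_one hA', ← Set.indicator_mul_right, Pi.one_apply, mul_one,
    integral_indicator hA'] at h
  rw [setIntegral_condExp_sub_integral hG hgi hA]
  exact h.trans (integral_abs_condExp_indicator_sub_le hG hH hA)

lemma ae_abs_condExp_sub_integral_le (hG : G ≤ m0) (hH : H ≤ m0) {g : Ω → ℝ}
    (hg : StronglyMeasurable[H] g) (hg1 : ∀ᵐ x ∂μ, |g x| ≤ 1) :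
    ∀ᵐ x ∂μ, |(μ[g|G]) x - ∫ y, g y ∂μ| ≤ 2 * phiMix μ G H :=
  ae_abs_le_of_forall_abs_setIntegral_le hG (f := fun x => (μ[g|G]) x - ∫ y, g y ∂μ)
    (stronglyMeasurable_condExp.sub stronglyMeasurable_const)
    (integrable_condExp.sub (integrable_const _))
    fun _ hA => abs_setIntegral_condExp_sub_integral_le hG hH hg hg1 hA

lemma eLpNorm_condExp_sub_integral_le (hG : G ≤ m0) (hH : H ≤ m0) {g : Ω → ℝ}
    (hg : Measurable[H] g) (hg1 : eLpNorm g ⊤ μ ≤ 1) :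
    eLpNorm (fun x => (μ[g|G]) x - ∫ y, g y ∂μ) ⊤ μ ≤ ENNReal.ofReal (2 * phiMix μ G H) := by
  have hg1' : ∀ᵐ x ∂μ, |g x| ≤ 1 := by
    filter_upwards [ae_norm_le_toReal_eLpNorm_top (ne_top_of_le_ne_top ENNReal.one_ne_top hg1)]
      with x hx
    exact hx.trans (ENNReal.toReal_le_of_le_ofReal zero_le_one (by simpa using hg1))
  rw [eLpNorm_exponent_top]
  exact eLpNormEssSup_le_of_ae_bound
    (ae_abs_condExp_sub_integral_le hG hH hg.stronglyMeasurable hg1')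

lemma exists_two_mul_abs_div_sub_le_eLpNorm (hG : G ≤ m0) (hH : H ≤ m0) {A B : Set Ω}
    (hA : MeasurableSet[G] A) (hB : MeasurableSet[H] B) (hA0 : 0 < μ.real A) :
    ∃ g : Ω → ℝ, Measurable[H] g ∧ eLpNorm g ⊤ μ ≤ 1 ∧
      2 * |μ.real (A ∩ B) / μ.real A - μ.real B| ≤
        (eLpNorm (fun x => (μ[g|G]) x - ∫ y, g y ∂μ) ⊤ μ).toReal := by
  set g : Ω → ℝ := fun x => 2 * B.indicator 1 x - 1
  have hgm : Measurable[H] g := (measurable_const.indicator hB).const_mul 2 |>.sub_const 1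
  have hg1 : ∀ x, ‖g x‖ ≤ 1 := fun x => by
    by_cases hx : x ∈ B <;> norm_num [g, hx]
  have hgnorm : eLpNorm g ⊤ μ ≤ 1 := by
    simpa [eLpNorm_exponent_top] using eLpNormEssSup_le_of_ae_bound (μ := μ) (.of_forall hg1)
  refine ⟨g, hgm, hgnorm, ?_⟩
  have hfin := ne_top_of_le_ne_top ENNReal.ofReal_ne_top
    (eLpNorm_condExp_sub_integral_le hG hH hgm hgnorm)
  have h := abs_setIntegral_le_toReal_eLpNorm_top_mul hfin A
  have hgi : Integrable g μ :=
    .of_bound (hgm.mono hH le_rfl).aestronglyMeasurable 1 (.of_forall hg1)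
  have hB' : MeasurableSet[m0] B := hH B hB
  have hind : Integrable (fun x => (2 : ℝ) * B.indicator 1 x) μ :=
    ((integrable_const (1 : ℝ)).indicator hB').const_mul 2
  have hgA : ∫ x in A, g x ∂μ = 2 * μ.real (A ∩ B) - μ.real A := by
    rw [integral_sub hind.integrableOn (integrable_const 1).integrableOn, integral_const_mul,
      integral_indicator_one hB']
    simp [measureReal_restrict_apply hB', Set.inter_comm]
  have hgΩ : ∫ x, g x ∂μ = 2 * μ.real B - 1 := by
    rw [integral_sub hind (integrable_const 1), integral_const_mul, integral_indicator_one hB']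
    simp
  set N := (eLpNorm (fun x => (μ[g|G]) x - ∫ y, g y ∂μ) ⊤ μ).toReal
  rw [setIntegral_condExp_sub_integral hG hgi hA, hgA, hgΩ] at h
  rw [div_sub' hA0.ne', abs_div, abs_of_pos hA0, mul_div_assoc', div_le_iff₀ hA0]
  calc 2 * |μ.real (A ∩ B) - μ.real A * μ.real B|
      = |2 * (μ.real (A ∩ B) - μ.real A * μ.real B)| := by rw [abs_mul, abs_two]
    _ = |2 * μ.real (A ∩ B) - μ.real A - μ.real A * (2 * μ.real B - 1)| := by ring_nf
    _ ≤ N * μ.real A := h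

end PhiMix

end

theorem stmt2 {Ω : Type*} [m0 : MeasurableSpace Ω] (μ : Measure Ω) [IsProbabilityMeasure μ]
    (G H : MeasurableSpace Ω) (hG : G ≤ m0) (hH : H ≤ m0) :
    2 * phiMix μ G H =
      sSup {x : ℝ | ∃ g : Ω → ℝ, Measurable[H] g ∧ eLpNorm g ⊤ μ ≤ 1 ∧
        x = (eLpNorm (fun ω => (μ[g|G]) ω - ∫ ω', g ω' ∂μ) ⊤ μ).toReal} := by
  set S := {x : ℝ | ∃ g : Ω → ℝ, Measurable[H] g ∧ eLpNorm g ⊤ μ ≤ 1 ∧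
    x = (eLpNorm (fun ω => (μ[g|G]) ω - ∫ ω', g ω' ∂μ) ⊤ μ).toReal}
  have hS_le : ∀ x ∈ S, x ≤ 2 * phiMix μ G H := by
    rintro _ ⟨g, hg, hg1, rfl⟩
    exact ENNReal.toReal_le_of_le_ofReal (mul_nonneg zero_le_two phiMix_nonneg)
      (eLpNorm_condExp_sub_integral_le hG hH hg hg1)
  have hS_nonneg : ∀ x ∈ S, 0 ≤ x := by
    rintro _ ⟨g, -, -, rfl⟩
    exact ENNReal.toReal_nonneg
  refine le_antisymm ?_ (csSup_le ⟨_, 0, measurable_const, by simp, rfl⟩ hS_le)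
  rw [← le_div_iff₀' two_pos]
  refine phiMix_le (div_nonneg (Real.sSup_nonneg hS_nonneg) zero_le_two) fun A B hA hB hA0 => ?_
  obtain ⟨g, hg, hg1, hle⟩ := exists_two_mul_abs_div_sub_le_eLpNorm hG hH hA hB hA0
  rw [le_div_iff₀' two_pos]
  exact hle.trans (le_csSup ⟨_, hS_le⟩ ⟨g, hg, hg1, rfl⟩)
end

section
/- Fix ℓ, N, l ∈ ℕ with ℓ ≥ 1 and l ≥ 1. For n ∈ {1,...,N} let A_n = { m ∈ {1,...,N} : min_{1≤i,j≤ℓ} |in − jm| ≤ l } and for integers a, b set d_ℓ(a,b) = min_{1≤i,j≤ℓ} |ia − jb|, and d_ℓ(A,B) = min over a ∈ A, b ∈ B of d_ℓ(a,b). For k ≥ 0 let 𝒜_n(k) = { m ∈ {1,...,N} : d_ℓ(A_n, A_m) = k }. Then |𝒜_n(k)| ≤ 4ℓ⁶(ℓ² + 2) l for every n and k. -/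
open scoped Classical

/-- `d_ℓ(a,b) = min_{1 ≤ i,j ≤ ℓ} |ia − jb|`. -/
noncomputable def dval (ℓ : ℕ) (a b : ℕ) : ℕ :=
  sInf {x : ℕ | ∃ i ∈ Finset.Icc 1 ℓ, ∃ j ∈ Finset.Icc 1 ℓ,
    x = ((i : ℤ) * (a : ℤ) - (j : ℤ) * (b : ℤ)).natAbs}

/-- `A_n = {1 ≤ m ≤ N : d_ℓ(n,m) ≤ l}`. -/
noncomputable def ASet (ℓ N l : ℕ) (n : ℕ) : Finset ℕ :=
  (Finset.Icc 1 N).filter (fun m : ℕ => dval ℓ n m ≤ l)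

/-- `d_ℓ(A,B) = min{d_ℓ(a,b) : a ∈ A, b ∈ B}`. -/
noncomputable def dSet (ℓ : ℕ) (A B : Finset ℕ) : ℕ :=
  sInf {x : ℕ | ∃ a ∈ A, ∃ b ∈ B, x = dval ℓ a b}

lemma dval_le (ℓ a b i j : ℕ) (hi : i ∈ Finset.Icc 1 ℓ) (hj : j ∈ Finset.Icc 1 ℓ) :
    dval ℓ a b ≤ ((i : ℤ) * a - (j : ℤ) * b).natAbs :=
  Nat.sInf_le ⟨i, hi, j, hj, rfl⟩

lemma dval_achieved (ℓ : ℕ) (hℓ : 1 ≤ ℓ) (a b : ℕ) :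
    ∃ i ∈ Finset.Icc 1 ℓ, ∃ j ∈ Finset.Icc 1 ℓ,
      dval ℓ a b = ((i : ℤ) * a - (j : ℤ) * b).natAbs := by
  have hne : {x : ℕ | ∃ i ∈ Finset.Icc 1 ℓ, ∃ j ∈ Finset.Icc 1 ℓ,
      x = ((i : ℤ) * a - (j : ℤ) * b).natAbs}.Nonempty :=
    ⟨((1 : ℤ) * a - (1 : ℤ) * b).natAbs, 1, by simp [hℓ], 1, by simp [hℓ], rfl⟩
  exact Nat.sInf_mem hne

lemma dval_self (ℓ : ℕ) (hℓ : 1 ≤ ℓ) (a : ℕ) : dval ℓ a a = 0 := by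
  have h := dval_le ℓ a a 1 1 (by simp [hℓ]) (by simp [hℓ])
  simpa using h

lemma dSet_achieved (ℓ : ℕ) {A B : Finset ℕ} (hA : A.Nonempty) (hB : B.Nonempty) :
    ∃ a ∈ A, ∃ b ∈ B, dSet ℓ A B = dval ℓ a b := by
  obtain ⟨a, ha⟩ := hA
  obtain ⟨b, hb⟩ := hB
  have hne : {x : ℕ | ∃ a ∈ A, ∃ b ∈ B, x = dval ℓ a b}.Nonempty :=
    ⟨dval ℓ a b, a, ha, b, hb, rfl⟩
  exact Nat.sInf_mem hne

lemma mem_ASet_self (ℓ N l n : ℕ) (hℓ : 1 ≤ ℓ) (hn : n ∈ Finset.Icc 1 N) :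
    n ∈ ASet ℓ N l n :=
  Finset.mem_filter.mpr ⟨hn, by rw [dval_self ℓ hℓ n]; exact Nat.zero_le l⟩

lemma card_interval (s : Finset ℕ) (c : ℚ) (R : ℕ)
    (h : ∀ m ∈ s, |(m : ℚ) - c| ≤ R) : s.card ≤ 2 * R + 1 := by
  rcases s.eq_empty_or_nonempty with rfl | hs
  · simp
  have hsub : s ⊆ Finset.Icc (s.min' hs) (s.max' hs) :=
    fun m hm => Finset.mem_Icc.mpr ⟨s.min'_le m hm, s.le_max' m hm⟩
  have h1 := abs_le.mp (h _ (s.min'_mem hs))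
  have h2 := abs_le.mp (h _ (s.max'_mem hs))
  have hq : (s.max' hs : ℚ) ≤ (s.min' hs : ℚ) + 2 * R := by
    push_cast at h1 h2 ⊢; linarith
  have hle : s.max' hs ≤ s.min' hs + 2 * R := by exact_mod_cast hq
  calc s.card ≤ (Finset.Icc (s.min' hs) (s.max' hs)).card := Finset.card_le_card hsub
    _ = s.max' hs + 1 - s.min' hs := Nat.card_Icc _ _
    _ ≤ 2 * R + 1 := by omega

set_option maxHeartbeats 1000000 in
theorem stmt9 (ℓ N l : ℕ) (hℓ : 1 ≤ ℓ) (hl : 1 ≤ l) (n : ℕ) (hn : n ∈ Finset.Icc 1 N)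
    (k : ℕ) :
    ((Finset.Icc 1 N).filter
        (fun m : ℕ => dSet ℓ (ASet ℓ N l n) (ASet ℓ N l m) = k)).card ≤
      4 * ℓ ^ 6 * (ℓ ^ 2 + 2) * l := by
  classical
  set S : Finset ℕ := (Finset.Icc 1 N).filter
      (fun m : ℕ => dSet ℓ (ASet ℓ N l n) (ASet ℓ N l m) = k) with hS
  set R : ℕ := (ℓ ^ 2 + 1) * l with hRdef
  set I : Finset ℕ := Finset.Icc 1 ℓ with hI
  set T : Finset ((ℕ × ℕ × ℕ × ℕ × ℕ × ℕ) × Bool) :=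
    (I ×ˢ I ×ˢ I ×ˢ I ×ˢ I ×ˢ I) ×ˢ (Finset.univ : Finset Bool) with hT
  -- tuple t.1 = (i, j, i', j', i'', j'')
  set C : ((ℕ × ℕ × ℕ × ℕ × ℕ × ℕ) × Bool) → ℚ := fun t =>
    ((t.1.1 * t.1.2.2.1 * t.1.2.2.2.2.2 : ℚ) * n -
      (if t.2 then (1 : ℚ) else -1) * (t.1.2.2.2.1 * t.1.2.2.2.2.2) * k) /
      (t.1.2.1 * t.1.2.2.2.1 * t.1.2.2.2.2.1) with hC
  have hsub : S ⊆ T.biUnion (fun t => S.filter (fun m => |(m : ℚ) - C t| ≤ R)) := by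
    intro m hm
    obtain ⟨hmIcc, hdk⟩ := Finset.mem_filter.mp hm
    have hAn : (ASet ℓ N l n).Nonempty := ⟨n, mem_ASet_self ℓ N l n hℓ hn⟩
    have hAm : (ASet ℓ N l m).Nonempty := ⟨m, mem_ASet_self ℓ N l m hℓ hmIcc⟩
    obtain ⟨a, ha, b, hb, hab⟩ := dSet_achieved ℓ hAn hAm
    have hk : dval ℓ a b = k := by rw [← hab]; exact hdk
    obtain ⟨i', hi', j', hj', hna⟩ := dval_achieved ℓ hℓ n a
    obtain ⟨i'', hi'', j'', hj'', hmb⟩ := dval_achieved ℓ hℓ m b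
    obtain ⟨i, hi, j, hj, habv⟩ := dval_achieved ℓ hℓ a b
    set x : ℤ := (i' : ℤ) * n - (j' : ℤ) * a with hxdef
    set y : ℤ := (i : ℤ) * a - (j : ℤ) * b with hydef
    set z : ℤ := (i'' : ℤ) * m - (j'' : ℤ) * b with hzdef
    have hx : x.natAbs ≤ l := by
      rw [← hna]; exact (Finset.mem_filter.mp ha).2
    have hz : z.natAbs ≤ l := by
      rw [← hmb]; exact (Finset.mem_filter.mp hb).2
    have hy : y.natAbs = k := by rw [← habv]; exact hk
    set s : Bool := decide (0 ≤ y) with hsdef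
    set t : (ℕ × ℕ × ℕ × ℕ × ℕ × ℕ) × Bool := ((i, j, i', j', i'', j''), s) with htdef
    have htT : t ∈ T := by
      simp only [hT, Finset.mem_product, Finset.mem_univ, and_true]
      exact ⟨hi, hj, hi', hj', hi'', hj''⟩
    refine Finset.mem_biUnion.mpr ⟨t, htT, Finset.mem_filter.mpr ⟨hm, ?_⟩⟩
    -- bounds on indices
    have hi1 : 1 ≤ i := (Finset.mem_Icc.mp hi).1
    have hi2 : i ≤ ℓ := (Finset.mem_Icc.mp hi).2
    have hj1 : 1 ≤ j := (Finset.mem_Icc.mp hj).1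
    have hj2 : j ≤ ℓ := (Finset.mem_Icc.mp hj).2
    have hi'1 : 1 ≤ i' := (Finset.mem_Icc.mp hi').1
    have hj'1 : 1 ≤ j' := (Finset.mem_Icc.mp hj').1
    have hj'2 : j' ≤ ℓ := (Finset.mem_Icc.mp hj').2
    have hi''1 : 1 ≤ i'' := (Finset.mem_Icc.mp hi'').1
    have hj''2 : j'' ≤ ℓ := (Finset.mem_Icc.mp hj'').2
    -- the sign identity
    have hyk : (if s then (1 : ℤ) else -1) * k = y := by
      by_cases h0 : 0 ≤ y
      · have hst : s = true := by simp [hsdef, h0]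
        rw [hst, if_pos rfl, one_mul]
        omega
      · have hsf : s = false := by simp [hsdef, h0]
        rw [hsf, if_neg (by simp)]
        omega
    set D : ℚ := (j : ℚ) * j' * i'' with hDdef
    have hD0 : 0 < D := by
      have h1 : (0 : ℚ) < (j : ℚ) := by exact_mod_cast hj1
      have h2 : (0 : ℚ) < (j' : ℚ) := by exact_mod_cast hj'1
      have h3 : (0 : ℚ) < (i'' : ℚ) := by exact_mod_cast hi''1
      positivity
    have hDC : D * C t = (i * i' * j'' : ℚ) * n - (j' * j'' : ℚ) * (y : ℚ) := by
      have hyq : (if s then (1 : ℚ) else -1) * (k : ℚ) = (y : ℚ) := by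
        by_cases h0 : s = true
        · rw [h0] at hyk ⊢
          rw [if_pos rfl] at hyk ⊢
          exact_mod_cast hyk
        · rw [Bool.not_eq_true] at h0
          rw [h0] at hyk ⊢
          rw [if_neg (by simp)] at hyk ⊢
          exact_mod_cast hyk
      simp only [hC, htdef]
      rw [mul_comm D _, div_mul_cancel₀ _ hD0.ne']
      rw [← hyq]; push_cast; ring
    -- integer identity
    have hZ : (j * j' * i'' : ℤ) * m =
        (i * i' * j'' : ℤ) * n - (j' * j'' : ℤ) * y - (i * j'' : ℤ) * x + (j * j' : ℤ) * z := by
      simp only [hxdef, hydef, hzdef]; ring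
    have hDm : D * (m : ℚ) =
        (i * i' * j'' : ℚ) * n - (j' * j'' : ℚ) * (y : ℚ)
          - (i * j'' : ℚ) * (x : ℚ) + (j * j' : ℚ) * (z : ℚ) := by
      have h := congrArg (fun w : ℤ => (w : ℚ)) hZ
      push_cast at h
      rw [hDdef]; push_cast; linarith [h]
    have hdiff : D * ((m : ℚ) - C t) = -((i * j'' : ℚ) * (x : ℚ)) + (j * j' : ℚ) * (z : ℚ) := by
      rw [mul_sub, hDC, hDm]; ring
    -- absolute value bounds
    have hxq : |(x : ℚ)| ≤ (l : ℚ) := by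
      have h : |x| ≤ (l : ℤ) := by rw [Int.abs_eq_natAbs]; exact_mod_cast hx
      exact_mod_cast h
    have hzq : |(z : ℚ)| ≤ (l : ℚ) := by
      have h : |z| ≤ (l : ℤ) := by rw [Int.abs_eq_natAbs]; exact_mod_cast hz
      exact_mod_cast h
    have hij0 : (0 : ℚ) ≤ (i * j'' : ℚ) := by positivity
    have hjj0 : (0 : ℚ) ≤ (j * j' : ℚ) := by positivity
    have hb1 : |-((i * j'' : ℚ) * (x : ℚ))| ≤ (i * j'' : ℚ) * l := by
      rw [abs_neg, abs_mul, abs_of_nonneg hij0]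
      exact mul_le_mul_of_nonneg_left hxq hij0
    have hb2 : |(j * j' : ℚ) * (z : ℚ)| ≤ (j * j' : ℚ) * l := by
      rw [abs_mul, abs_of_nonneg hjj0]
      exact mul_le_mul_of_nonneg_left hzq hjj0
    have habs1 : |D * ((m : ℚ) - C t)| ≤ (i * j'' : ℚ) * l + (j * j' : ℚ) * l := by
      rw [hdiff]
      exact (abs_add_le _ _).trans (add_le_add hb1 hb2)
    have hnat : i * j'' * l + j * j' * l ≤ R * (j * j' * i'') := by
      rw [hRdef]
      have hD1 : 1 ≤ j * j' * i'' := Nat.one_le_iff_ne_zero.mpr (by positivity)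
      have h1 : i * j'' ≤ ℓ ^ 2 := by
        calc i * j'' ≤ ℓ * ℓ := Nat.mul_le_mul hi2 hj''2
          _ = ℓ ^ 2 := (pow_two ℓ).symm
      have h2 : i * j'' * l ≤ ℓ ^ 2 * l * (j * j' * i'') := by
        calc i * j'' * l ≤ ℓ ^ 2 * l := Nat.mul_le_mul_right l h1
          _ ≤ ℓ ^ 2 * l * (j * j' * i'') := Nat.le_mul_of_pos_right _ hD1
      have h3 : j * j' * l ≤ l * (j * j' * i'') := by
        calc j * j' * l = l * (j * j') * 1 := by ring
          _ ≤ l * (j * j') * i'' := Nat.mul_le_mul_left _ hi''1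
          _ = l * (j * j' * i'') := by ring
      calc i * j'' * l + j * j' * l ≤ ℓ ^ 2 * l * (j * j' * i'') + l * (j * j' * i'') :=
            Nat.add_le_add h2 h3
        _ = (ℓ ^ 2 + 1) * l * (j * j' * i'') := by ring
    have habs2 : (i * j'' : ℚ) * l + (j * j' : ℚ) * l ≤ (R : ℚ) * D := by
      rw [hDdef]
      exact_mod_cast hnat
    have hfin : |(m : ℚ) - C t| * D ≤ (R : ℚ) * D := by
      calc |(m : ℚ) - C t| * D = |(m : ℚ) - C t| * |D| := by rw [abs_of_pos hD0]
        _ = |D * ((m : ℚ) - C t)| := by rw [abs_mul D, mul_comm]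
        _ ≤ (i * j'' : ℚ) * l + (j * j' : ℚ) * l := habs1
        _ ≤ (R : ℚ) * D := habs2
    exact le_of_mul_le_mul_right hfin hD0
  -- counting
  have hTcard : T.card = ℓ ^ 6 * 2 := by
    simp [hT, hI, Nat.card_Icc]
    ring
  have hcount : S.card ≤ ℓ ^ 6 * 2 * (2 * R + 1) := by
    calc S.card ≤ (T.biUnion (fun t => S.filter (fun m : ℕ => |(m : ℚ) - C t| ≤ R))).card :=
          Finset.card_le_card hsub
      _ ≤ ∑ t ∈ T, (S.filter (fun m : ℕ => |(m : ℚ) - C t| ≤ R)).card :=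
          Finset.card_biUnion_le
      _ ≤ T.card * (2 * R + 1) := by
          apply Finset.sum_le_card_nsmul
          intro t _
          exact card_interval _ (C t) R (fun m hm => (Finset.mem_filter.mp hm).2)
      _ = ℓ ^ 6 * 2 * (2 * R + 1) := by rw [hTcard]
  have hℓ6 : 1 ≤ ℓ ^ 6 := Nat.one_le_pow _ _ hℓ
  have hkey : 2 * ℓ ^ 6 ≤ 4 * ℓ ^ 6 * l := by
    calc 2 * ℓ ^ 6 ≤ 4 * ℓ ^ 6 * 1 := by omega
      _ ≤ 4 * ℓ ^ 6 * l := Nat.mul_le_mul_left _ hl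
  calc S.card ≤ ℓ ^ 6 * 2 * (2 * ((ℓ ^ 2 + 1) * l) + 1) := by rw [← hRdef]; exact hcount
    _ = 4 * ℓ ^ 6 * (ℓ ^ 2 + 1) * l + 2 * ℓ ^ 6 := by ring
    _ ≤ 4 * ℓ ^ 6 * (ℓ ^ 2 + 1) * l + 4 * ℓ ^ 6 * l := Nat.add_le_add_left hkey _
    _ = 4 * ℓ ^ 6 * (ℓ ^ 2 + 2) * l := by ring
end
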